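/- arXiv:1202.4419 — 4 statements merged into one kernel-verified Lean document; each statement's English description precedes it below -/
import Mathlib

section
/- Every graph in which the neighborhood of every vertex induces a disjoint union of at most two cliques is a line graph. -/
open SimpleGraph

/-- `G` is a line graph if it is isomorphic to the line graph of some graph. -/
def IsLineGraph {V : Type u} (G : SimpleGraph V) : Prop :=
  ∃ (W : Type u) (H : SimpleGraph W), Nonempty (G ≃g H.lineGraph)

/-- The neighborhood of `v` in `G` induces a disjoint union of at most two cliques:
it can be partitioned into two (possibly empty) cliques with no edges between them. -/
def NbhdTwoCliques {V : Type u} (G : SimpleGraph V) (v : V) : Prop :=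
  ∃ A B : Set V, G.neighborSet v = A ∪ B ∧ Disjoint A B ∧
    G.IsClique A ∧ G.IsClique B ∧ ∀ a ∈ A, ∀ b ∈ B, ¬ G.Adj a b

/-!
Split the neighbourhood of every vertex `v` into two cliques `C v false`, `C v true` with no
edges between them. The root graph has a vertex for every set `insert v (C v b)`, plus a fresh
pendant vertex for every empty part, and `v` becomes the edge joining the two vertices for its
parts. If `u ∈ C v b` and `v ∈ C u b'`, then `insert v (C v b) = insert u (C u b')`: a further
member of the first set is adjacent to `u` and to `v`, and the absence of edges between the two
parts of `u` puts it in `C u b'`. So adjacent vertices of `G` become edges with a common end;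
conversely a common end is a common clique, and the two parts of a vertex being disjoint makes
distinct vertices give distinct edges.
-/

theorem isLineGraph_of_injective_sym2 {V W : Type u} {G : SimpleGraph V} (f : V → Sym2 W)
    (hf : Function.Injective f) (hdiag : ∀ v, ¬ (f v).IsDiag)
    (hadj : ∀ v w, v ≠ w → (G.Adj v w ↔ ∃ x, x ∈ f v ∧ x ∈ f w)) :
    IsLineGraph G := by
  let H := fromEdgeSet (Set.range f)
  have hmem v : f v ∈ H.edgeSet := by
    rw [edgeSet_fromEdgeSet]; exact ⟨⟨v, rfl⟩, hdiag v⟩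
  let e : V ≃ H.edgeSet := Equiv.ofBijective (fun v => ⟨f v, hmem v⟩)
    ⟨fun v w h => hf (congrArg Subtype.val h), by
      rintro ⟨_, h⟩
      rw [edgeSet_fromEdgeSet] at h
      obtain ⟨⟨v, rfl⟩, -⟩ := h
      exact ⟨v, rfl⟩⟩
  refine ⟨W, H, ⟨e, fun {v w} => ?_⟩⟩
  rw [lineGraph_adj_iff_exists]
  by_cases hvw : v = w
  · subst hvw; simp
  · rw [hadj v w hvw]
    exact and_iff_right (e.injective.ne hvw)

section CliqueSplitting

variable {V : Type u}

structure IsCliqueSplitting (G : SimpleGraph V) (C : V → Bool → Set V) : Prop where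
  neighborSet_eq : ∀ v, G.neighborSet v = C v false ∪ C v true
  disjoint : ∀ v, Disjoint (C v false) (C v true)
  isClique : ∀ v b, G.IsClique (C v b)
  not_adj : ∀ v, ∀ a ∈ C v false, ∀ x ∈ C v true, ¬ G.Adj a x

theorem exists_isCliqueSplitting {G : SimpleGraph V} (h : ∀ v, NbhdTwoCliques G v) :
    ∃ C, IsCliqueSplitting G C := by
  choose A B hAB hdisj hA hB hcross using h
  exact ⟨fun v b => cond b (B v) (A v), hAB, hdisj, fun v b => by cases b; exacts [hA v, hB v],
    hcross⟩

open Classical in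
/-- The end of the edge of `v` at its part `C v b`; an empty part gets a pendant end of its own. -/
noncomputable def rootVertex (C : V → Bool → Set V) (v : V) (b : Bool) :
    Set V ⊕ (V × Bool) :=
  if (C v b).Nonempty then .inl (insert v (C v b)) else .inr (v, b)

noncomputable def rootEdge (C : V → Bool → Set V) (v : V) : Sym2 (Set V ⊕ (V × Bool)) :=
  s(rootVertex C v false, rootVertex C v true)

lemma mem_rootEdge_iff {C : V → Bool → Set V} {v : V} {x : Set V ⊕ (V × Bool)} :
    x ∈ rootEdge C v ↔ ∃ b, rootVertex C v b = x := by
  simp only [rootEdge, Sym2.mem_iff, Bool.exists_bool, eq_comm]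

lemma mem_of_rootVertex_eq {C : V → Bool → Set V} {v w : V} {b b' : Bool} (hvw : v ≠ w)
    (h : rootVertex C v b = rootVertex C w b') : v ∈ C w b' := by
  unfold rootVertex at h
  split_ifs at h
  · have hv : v ∈ insert w (C w b') := Sum.inl.inj h ▸ Set.mem_insert v _
    exact hv.resolve_left hvw
  · exact absurd (congrArg Prod.fst (Sum.inr.inj h)) hvw

namespace IsCliqueSplitting

variable {G : SimpleGraph V} {C : V → Bool → Set V} (hC : IsCliqueSplitting G C)
include hC

lemma adj_iff_exists_mem {v u : V} : G.Adj v u ↔ ∃ b, u ∈ C v b := by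
  rw [← mem_neighborSet, hC.neighborSet_eq, Set.mem_union, Bool.exists_bool]

lemma adj_of_mem {v u : V} {b : Bool} (hu : u ∈ C v b) : G.Adj v u :=
  hC.adj_iff_exists_mem.2 ⟨b, hu⟩

lemma disjoint_of_ne (v : V) {b c : Bool} (hbc : b ≠ c) : Disjoint (C v b) (C v c) := by
  cases b <;> cases c
  · exact absurd rfl hbc
  · exact hC.disjoint v
  · exact (hC.disjoint v).symm
  · exact absurd rfl hbc

lemma not_adj_of_ne {v a x : V} {b c : Bool} (ha : a ∈ C v b) (hx : x ∈ C v c) (hbc : b ≠ c) :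
    ¬ G.Adj a x := by
  cases b <;> cases c
  · exact absurd rfl hbc
  · exact hC.not_adj v a ha x hx
  · exact fun h => hC.not_adj v x hx a ha h.symm
  · exact absurd rfl hbc

lemma insert_subset_insert {v u : V} {b b' : Bool} (hu : u ∈ C v b) (hv : v ∈ C u b') :
    insert v (C v b) ⊆ insert u (C u b') := by
  rintro x (rfl | hx)
  · exact Set.mem_insert_of_mem _ hv
  by_cases hxu : x = u
  · exact hxu ▸ Set.mem_insert x _
  obtain ⟨c, hxc⟩ := hC.adj_iff_exists_mem.1 (hC.isClique v b hx hu hxu).symm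
  by_cases hc : c = b'
  · exact Set.mem_insert_of_mem _ (hc ▸ hxc)
  · exact absurd (hC.adj_of_mem hx) (hC.not_adj_of_ne hv hxc (Ne.symm hc))

lemma exists_rootVertex_eq {v u : V} {b : Bool} (hu : u ∈ C v b) :
    ∃ b', rootVertex C v b = rootVertex C u b' := by
  obtain ⟨b', hv⟩ := hC.adj_iff_exists_mem.1 (hC.adj_of_mem hu).symm
  have hvu := (hC.insert_subset_insert hu hv).antisymm (hC.insert_subset_insert hv hu)
  exact ⟨b', by rw [rootVertex, rootVertex, if_pos ⟨u, hu⟩, if_pos ⟨v, hv⟩, hvu]⟩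

lemma rootVertex_ne (v : V) {b c : Bool} (hbc : b ≠ c) :
    rootVertex C v b ≠ rootVertex C v c := by
  intro h
  unfold rootVertex at h
  split_ifs at h with hb hc
  · obtain ⟨a, ha⟩ := hb
    have ha' : a ∈ insert v (C v c) := Sum.inl.inj h ▸ Set.mem_insert_of_mem v ha
    exact Set.disjoint_left.1 (hC.disjoint_of_ne v hbc) ha
      (ha'.resolve_left (hC.adj_of_mem ha).ne')
  · exact hbc (congrArg Prod.snd (Sum.inr.inj h))

lemma rootEdge_not_isDiag (v : V) : ¬ (rootEdge C v).IsDiag := by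
  rw [rootEdge, Sym2.mk_isDiag_iff]
  exact hC.rootVertex_ne v Bool.false_ne_true

lemma rootEdge_injective : Function.Injective (rootEdge C) := by
  intro v w h
  by_contra hvw
  obtain ⟨b, hb⟩ := mem_rootEdge_iff.1
    (h ▸ Sym2.mem_mk_left _ _ : rootVertex C v false ∈ rootEdge C w)
  obtain ⟨c, hc⟩ := mem_rootEdge_iff.1
    (h ▸ Sym2.mem_mk_right _ _ : rootVertex C v true ∈ rootEdge C w)
  have hbc : b ≠ c := by
    rintro rfl
    exact hC.rootVertex_ne v Bool.false_ne_true (hb.symm.trans hc)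
  exact Set.disjoint_left.1 (hC.disjoint_of_ne w hbc)
    (mem_of_rootVertex_eq hvw hb.symm) (mem_of_rootVertex_eq hvw hc.symm)

lemma adj_iff_rootEdge {v w : V} (hvw : v ≠ w) :
    G.Adj v w ↔ ∃ x, x ∈ rootEdge C v ∧ x ∈ rootEdge C w := by
  simp only [mem_rootEdge_iff]
  constructor
  · intro hadj
    obtain ⟨b, hb⟩ := hC.adj_iff_exists_mem.1 hadj
    obtain ⟨b', hb'⟩ := hC.exists_rootVertex_eq hb
    exact ⟨_, ⟨b, rfl⟩, b', hb'.symm⟩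
  · rintro ⟨x, ⟨b, rfl⟩, b', h⟩
    exact (hC.adj_of_mem (mem_of_rootVertex_eq hvw h.symm)).symm

theorem isLineGraph : IsLineGraph G :=
  isLineGraph_of_injective_sym2 (rootEdge C) hC.rootEdge_injective hC.rootEdge_not_isDiag
    fun _ _ => hC.adj_iff_rootEdge

end IsCliqueSplitting

end CliqueSplitting

/-- Every graph in which the neighborhood of every vertex induces a disjoint union of
at most two cliques is a line graph. -/
theorem stmt1 {V : Type u} (G : SimpleGraph V) (h : ∀ v : V, NbhdTwoCliques G v) :
    IsLineGraph G := by
  obtain ⟨C, hC⟩ := exists_isCliqueSplitting h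
  exact hC.isLineGraph
end

section
/- For k ≥ 4, if a subdivision F of L(K_k) is a line graph, then F is isomorphic to L(K_k) itself (i.e., no edge of L(K_k) was actually subdivided). -/
open SimpleGraph

universe u

/-- A bundled graph: a vertex type together with a simple graph on it. -/
abbrev GraphSig := Σ V : Type u, SimpleGraph V

/-- `Y` is obtained from `X` by subdividing one edge `ab`: the edge `ab` is replaced by a
path `a - w - b` through a new vertex `w` (modelled by `Option X.1` with `w := none`). -/
def SubdivStep (X Y : GraphSig.{u}) : Prop :=
  ∃ a b : X.1, X.2.Adj a b ∧
    Nonempty (Y.2 ≃g ((X.2.deleteEdges {s(a, b)}).map Function.Embedding.some ⊔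
      SimpleGraph.fromEdgeSet
        {s(Option.some a, (Option.none : Option X.1)), s(Option.some b, Option.none)}))

/-- `H'` is a subdivision of `H`: it is obtained from `H` by a finite sequence of
edge subdivisions. -/
def IsSubdivisionOf (H' H : GraphSig.{u}) : Prop :=
  Relation.ReflTransGen SubdivStep H H'

/-!
Line graphs are claw-free, so it suffices to show that every proper subdivision of `L(K_k)`
contains an induced claw. In `L(K_k)` with `k ≥ 4`, for adjacent vertices `e, f` the
neighbourhood of `e` minus `f` is not a clique; hence subdividing `ef` makes `e` the centre of a
claw whose leaves are the new vertex and two nonadjacent neighbours of `e`. Once present, a claw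
survives every further subdivision: if one of its edges `cx` is subdivided, the same argument
applies at `c` with the two other leaves.
-/

theorem Fintype.exists_ne_ne_ne {α : Type*} [Fintype α] (hα : 4 ≤ Fintype.card α) (u v w : α) :
    ∃ x, x ≠ u ∧ x ≠ v ∧ x ≠ w := by
  classical
  obtain ⟨x, -, hx⟩ := Finset.exists_mem_notMem_of_card_lt_card (s := {u, v, w})
    (t := Finset.univ) (Finset.card_le_three.trans_lt (by rw [Finset.card_univ]; omega))
  exact ⟨x, by simpa using hx⟩

namespace SimpleGraph

variable {V W : Type*}

def HasClaw (G : SimpleGraph V) : Prop :=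
  ∃ c x y z : V, x ≠ y ∧ x ≠ z ∧ y ≠ z ∧
    G.Adj c x ∧ G.Adj c y ∧ G.Adj c z ∧
    ¬G.Adj x y ∧ ¬G.Adj x z ∧ ¬G.Adj y z

theorem HasClaw.of_iso {G : SimpleGraph V} {H : SimpleGraph W} (e : G ≃g H) (h : G.HasClaw) :
    H.HasClaw := by
  obtain ⟨c, x, y, z, hxy, hxz, hyz, hcx, hcy, hcz, hnxy, hnxz, hnyz⟩ := h
  refine ⟨e c, e x, e y, e z, ?_, ?_, ?_, ?_, ?_, ?_, ?_, ?_, ?_⟩ <;>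
    simp [e.map_adj_iff, *]

theorem not_hasClaw_lineGraph (H : SimpleGraph W) : ¬H.lineGraph.HasClaw := by
  rintro ⟨e, x, y, z, hxy, hxz, hyz, hex, hey, hez, hnxy, hnxz, hnyz⟩
  rw [lineGraph_adj_iff_exists] at *
  obtain ⟨-, ux, hue, hux⟩ := hex
  obtain ⟨-, uy, hye, huy⟩ := hey
  obtain ⟨-, uz, hze, huz⟩ := hez
  -- The three leaves meet the centre edge, which has only two endpoints.
  by_cases hxy' : ux = uy
  · exact hnxy ⟨hxy, ux, hux, hxy' ▸ huy⟩
  rw [(Sym2.mem_and_mem_iff hxy').mp ⟨hue, hye⟩, Sym2.mem_iff] at hze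
  rcases hze with rfl | rfl
  · exact hnxz ⟨hxz, uz, hux, huz⟩
  · exact hnyz ⟨hyz, uz, huy, huz⟩

def subdivideEdge (G : SimpleGraph V) (a b : V) : SimpleGraph (Option V) :=
  (G.deleteEdges {s(a, b)}).map Function.Embedding.some ⊔
    fromEdgeSet {s(some a, none), s(some b, none)}

section subdivideEdge

variable {G : SimpleGraph V} {a b u v : V}

@[simp]
theorem subdivideEdge_adj_some_some :
    (G.subdivideEdge a b).Adj (some u) (some v) ↔ G.Adj u v ∧ s(u, v) ≠ s(a, b) := by
  simp only [subdivideEdge, sup_adj, map_adj]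
  simp [Function.Embedding.some]

@[simp]
theorem subdivideEdge_adj_some_none : (G.subdivideEdge a b).Adj (some u) none ↔ u = a ∨ u = b := by
  simp only [subdivideEdge, sup_adj, map_adj]
  simp [Function.Embedding.some]

@[simp]
theorem subdivideEdge_adj_none_some : (G.subdivideEdge a b).Adj none (some u) ↔ u = a ∨ u = b := by
  rw [adj_comm, subdivideEdge_adj_some_none]

theorem subdivideEdge_comm (G : SimpleGraph V) (a b : V) :
    G.subdivideEdge a b = G.subdivideEdge b a := by
  ext (_ | u) (_ | v) <;> simp [Sym2.eq_swap, or_comm]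

theorem hasClaw_subdivideEdge_of_not_isClique (h : ¬G.IsClique (G.neighborSet a \ {b})) :
    (G.subdivideEdge a b).HasClaw := by
  obtain ⟨⟨x, hax, hxb⟩, ⟨y, hay, hyb⟩, hxy, hnxy⟩ := (not_isClique_iff G).mp h
  simp only [mem_neighborSet, Set.mem_singleton_iff] at hax hay hxb hyb
  refine ⟨some a, none, some x, some y, ?_⟩
  simp [hax, hay, hxb, hyb, Subtype.coe_ne_coe.mpr hxy, hnxy, hax.ne', hay.ne']

theorem HasClaw.subdivideEdge (h : G.HasClaw) (a b : V) : (G.subdivideEdge a b).HasClaw := by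
  obtain ⟨c, x, y, z, hxy, hxz, hyz, hcx, hcy, hcz, hnxy, hnxz, hnyz⟩ := h
  -- If `ab` is an edge `cx` of the claw, the other two leaves make `c` a new claw centre.
  have of_claw_edge : ∀ {x y z}, G.Adj c x → G.Adj c y → G.Adj c z → y ≠ x → z ≠ x → y ≠ z →
      ¬G.Adj y z → s(a, b) = s(c, x) → (G.subdivideEdge a b).HasClaw := by
    intro x y z hcx hcy hcz hyx hzx hyz hnyz hab
    have hclaw : (G.subdivideEdge c x).HasClaw :=
      hasClaw_subdivideEdge_of_not_isClique <| (not_isClique_iff G).mpr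
        ⟨⟨y, hcy, hyx⟩, ⟨z, hcz, hzx⟩, Subtype.coe_ne_coe.mp hyz, hnyz⟩
    rcases Sym2.eq_iff.mp hab with ⟨rfl, rfl⟩ | ⟨rfl, rfl⟩
    · exact hclaw
    · rwa [subdivideEdge_comm]
  by_cases hx : s(a, b) = s(c, x)
  · exact of_claw_edge hcx hcy hcz hxy.symm hxz.symm hyz hnyz hx
  by_cases hy : s(a, b) = s(c, y)
  · exact of_claw_edge hcy hcx hcz hxy hyz.symm hxz hnxz hy
  by_cases hz : s(a, b) = s(c, z)
  · exact of_claw_edge hcz hcx hcy hxz hyz hxy hnxy hz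
  refine ⟨some c, some x, some y, some z, ?_⟩
  simp [*, Ne.symm hx, Ne.symm hy, Ne.symm hz]

end subdivideEdge

def Iso.subdivideEdge {G : SimpleGraph V} {G' : SimpleGraph W} (e : G ≃g G') (a b : V) :
    G.subdivideEdge a b ≃g G'.subdivideEdge (e a) (e b) where
  toEquiv := e.toEquiv.optionCongr
  map_rel_iff' := by
    rintro (_ | u) (_ | v) <;> simp [e.map_adj_iff, e.injective.eq_iff]

theorem not_isClique_lineGraph_completeGraph_neighborSet_sdiff [Fintype V]
    (hV : 4 ≤ Fintype.card V) {e f : (completeGraph V).edgeSet}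
    (hef : (completeGraph V).lineGraph.Adj e f) :
    ¬(completeGraph V).lineGraph.IsClique ((completeGraph V).lineGraph.neighborSet e \ {f}) := by
  obtain ⟨hne, v, hve, hvf⟩ := lineGraph_adj_iff_exists.mp hef
  obtain ⟨q, hq⟩ := Sym2.mem_iff_exists.mp hve
  obtain ⟨t, ht⟩ := Sym2.mem_iff_exists.mp hvf
  have hvq : v ≠ q := by simpa [hq] using e.2
  have hvt : v ≠ t := by simpa [ht] using f.2
  have hqt : q ≠ t := by rintro rfl; exact hne (Subtype.ext (hq.trans ht.symm))
  obtain ⟨w, hwv, hwq, hwt⟩ := Fintype.exists_ne_ne_ne hV v q t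
  -- `qt` and `vw` both meet `e = vq` but are disjoint.
  rw [not_isClique_iff]
  refine ⟨⟨⟨s(q, t), by simpa using hqt⟩, ?_⟩, ⟨⟨s(v, w), by simpa using hwv.symm⟩, ?_⟩, ?_, ?_⟩ <;>
    simp [lineGraph_adj_iff_exists, Subtype.ext_iff, hq, ht, hvq.symm, hvt, hvt.symm, hqt, hwv,
      hwq.symm, hwt, hwt.symm]

end SimpleGraph

open SimpleGraph

theorem IsSubdivisionOf.nonempty_iso_or_hasClaw {V : Type u} {G : SimpleGraph V}
    (hG : ∀ a b, G.Adj a b → ¬G.IsClique (G.neighborSet a \ {b})) {F : GraphSig.{u}}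
    (hF : IsSubdivisionOf F ⟨V, G⟩) : Nonempty (F.2 ≃g G) ∨ F.2.HasClaw := by
  induction hF with
  | refl => exact .inl ⟨.refl⟩
  | @tail X Y _ hstep ih =>
    obtain ⟨a, b, hab, ⟨eY⟩⟩ := hstep
    have eY : Y.2 ≃g X.2.subdivideEdge a b := eY
    refine .inr (HasClaw.of_iso eY.symm ?_)
    rcases ih with ⟨⟨eX⟩⟩ | hX
    · exact (hasClaw_subdivideEdge_of_not_isClique (hG _ _ (eX.map_adj_iff.mpr hab))).of_iso
        (eX.subdivideEdge a b).symm
    · exact hX.subdivideEdge a b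

/-- For `k ≥ 4`, if a subdivision `F` of `L(K_k)` is a line graph, then `F` is isomorphic
to `L(K_k)` itself, i.e. no edge was actually subdivided. -/
theorem stmt8 (k : ℕ) (hk : 4 ≤ k) (F : GraphSig.{0})
    (hsub : IsSubdivisionOf F ⟨_, (completeGraph (Fin k)).lineGraph⟩)
    (hline : IsLineGraph F.2) :
    Nonempty (F.2 ≃g (completeGraph (Fin k)).lineGraph) := by
  have hk' : 4 ≤ Fintype.card (Fin k) := by rwa [Fintype.card_fin]
  refine (hsub.nonempty_iso_or_hasClaw fun _ _ ↦
    not_isClique_lineGraph_completeGraph_neighborSet_sdiff hk').resolve_right ?_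
  obtain ⟨W, H, ⟨e⟩⟩ := hline
  exact fun hF ↦ not_hasClaw_lineGraph H (hF.of_iso e)
end

section
/- A graph G contains K_k as a subgraph if and only if the line graph L(G) contains L(K_k) as an induced subgraph, for k ≥ 4. -/
/-!
An induced copy `ψ` of `L(K_k)` in `L(G)` sends each edge `ij` of `K_k` to an edge `E(ij)` of `G`
(`imageEdge ψ`), and two such image edges meet exactly when the corresponding edges of `K_k` do.
For fixed `i`, the `k - 1 ≥ 3` edges `E(ij)` pairwise meet, so they either all pass through one
vertex `c(i)` or three of them form a triangle. A fourth edge meeting all sides of a triangle is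
one of its sides, so the triangle case forces `k = 4`.

If every `i` has such a centre `c(i)`, then `c` is injective (disjoint edges of `K_k` have
disjoint images) and `E(ij) = c(i)c(j)`, so `c` spans a `K_k`. If the edges at `i` form a
triangle `abc`, the three edges of `K_4` avoiding `i` are sent to edges `aw`, `bw`, `cw` through a
common new vertex `w`, and `{a, b, c, w}` spans a `K_4`. The converse is functoriality of the
line graph.
-/

open SimpleGraph

namespace Sym2

variable {α : Type*}

def Meets (x y : Sym2 α) : Prop := ∃ v, v ∈ x ∧ v ∈ y

theorem Meets.refl (x : Sym2 α) : x.Meets x := by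
  induction x using Sym2.ind with | _ a b => exact ⟨a, mem_mk_left a b, mem_mk_left a b⟩

theorem Meets.left_mem {y : Sym2 α} {a b : α} (h : y.Meets s(a, b)) (hb : b ∉ y) : a ∈ y := by
  obtain ⟨v, hvy, hv⟩ := h
  rcases mem_iff.1 hv with rfl | rfl
  exacts [hvy, absurd hvy hb]

theorem Meets.right_mem {y : Sym2 α} {a b : α} (h : y.Meets s(a, b)) (ha : a ∉ y) : b ∈ y :=
  (eq_swap (a := a) ▸ h).left_mem ha

theorem mem_of_meets_of_mem_three {x₁ x₂ x₃ y : Sym2 α} {c : α}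
    (h₁₂ : x₁ ≠ x₂) (h₁₃ : x₁ ≠ x₃) (h₂₃ : x₂ ≠ x₃) (hc₁ : c ∈ x₁) (hc₂ : c ∈ x₂) (hc₃ : c ∈ x₃)
    (hy₁ : y.Meets x₁) (hy₂ : y.Meets x₂) (hy₃ : y.Meets x₃) : c ∈ y := by
  induction x₁ using Sym2.ind with | _ a₁ b₁ =>
  induction x₂ using Sym2.ind with | _ a₂ b₂ =>
  induction x₃ using Sym2.ind with | _ a₃ b₃ =>
  induction y using Sym2.ind with | _ p q =>
  simp only [Meets, mem_iff, ne_eq, Sym2.eq_iff] at *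
  grind

theorem exists_eq_triangle_of_meets {x₁ x₂ x₃ : Sym2 α}
    (h₁₂ : x₁.Meets x₂) (h₁₃ : x₁.Meets x₃) (h₂₃ : x₂.Meets x₃)
    (hno : ¬∃ v, v ∈ x₁ ∧ v ∈ x₂ ∧ v ∈ x₃) :
    ∃ a b c, a ≠ b ∧ a ≠ c ∧ b ≠ c ∧ x₁ = s(a, b) ∧ x₂ = s(a, c) ∧ x₃ = s(b, c) := by
  obtain ⟨a, ha₁, ha₂⟩ := h₁₂
  obtain ⟨b, hb₁, hb₃⟩ := h₁₃
  obtain ⟨c, hc₂, hc₃⟩ := h₂₃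
  have hab : a ≠ b := by rintro rfl; exact hno ⟨a, ha₁, ha₂, hb₃⟩
  have hac : a ≠ c := by rintro rfl; exact hno ⟨a, ha₁, ha₂, hc₃⟩
  have hbc : b ≠ c := by rintro rfl; exact hno ⟨b, hb₁, hc₂, hb₃⟩
  exact ⟨a, b, c, hab, hac, hbc, (mem_and_mem_iff hab).1 ⟨ha₁, hb₁⟩,
    (mem_and_mem_iff hac).1 ⟨ha₂, hc₂⟩, (mem_and_mem_iff hbc).1 ⟨hb₃, hc₃⟩⟩

theorem eq_side_of_meets_triangle {y : Sym2 α} {a b c : α} (hab : a ≠ b) (hac : a ≠ c)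
    (hbc : b ≠ c) (h₁ : y.Meets s(a, b)) (h₂ : y.Meets s(a, c)) (h₃ : y.Meets s(b, c)) :
    y = s(a, b) ∨ y = s(a, c) ∨ y = s(b, c) := by
  induction y using Sym2.ind with | _ p q =>
  simp only [Meets, mem_iff, Sym2.eq_iff] at *
  grind

end Sym2

theorem Fin.exists_two_ne_of_four_le {k : ℕ} (hk : 4 ≤ k) (a b : Fin k) :
    ∃ c d : Fin k, c ≠ d ∧ a ≠ c ∧ a ≠ d ∧ b ≠ c ∧ b ≠ d := by
  have hcard : ∀ s : Finset (Fin k), s.card < k → ∃ j, j ∉ s := fun s hs => by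
    obtain ⟨j, -, hj⟩ := Finset.exists_mem_notMem_of_card_lt_card (s := s) (t := Finset.univ)
      (by rwa [Finset.card_univ, Fintype.card_fin])
    exact ⟨j, hj⟩
  obtain ⟨c, hc⟩ := hcard {a, b} (Finset.card_le_two.trans_lt (by omega))
  obtain ⟨d, hd⟩ := hcard {a, b, c} (Finset.card_le_three.trans_lt (by omega))
  simp only [Finset.mem_insert, Finset.mem_singleton, not_or] at hc hd
  exact ⟨c, d, by grind⟩

namespace SimpleGraph

theorem completeGraph_isContained_iff {α V : Type*} {G : SimpleGraph V} :
    completeGraph α ⊑ G ↔ ∃ f : α ↪ V, ∀ i j, i ≠ j → G.Adj (f i) (f j) :=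
  ⟨fun ⟨f⟩ => ⟨f.toEmbedding, fun _ _ h => f.toHom.map_adj h⟩,
    fun ⟨f, hf⟩ => ⟨⟨⟨f, hf _ _⟩, f.injective⟩⟩⟩

variable {V : Type*} {G : SimpleGraph V} {k : ℕ}

section LineGraphEmbedding

variable (ψ : (completeGraph (Fin k)).lineGraph ↪g G.lineGraph)

def imageEdge {i j : Fin k} (h : i ≠ j) : Sym2 V := ψ ⟨s(i, j), h⟩

theorem imageEdge_mem_edgeSet {i j : Fin k} (h : i ≠ j) : imageEdge ψ h ∈ G.edgeSet :=
  (ψ ⟨s(i, j), h⟩).2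

theorem imageEdge_comm {i j : Fin k} (h : i ≠ j) : imageEdge ψ h.symm = imageEdge ψ h := by
  simp only [imageEdge, Sym2.eq_swap]

theorem imageEdge_eq_iff {i j i' j' : Fin k} (h : i ≠ j) (h' : i' ≠ j') :
    imageEdge ψ h = imageEdge ψ h' ↔ s(i, j) = s(i', j') := by
  rw [imageEdge, imageEdge, ← Subtype.ext_iff, ψ.injective.eq_iff, Subtype.ext_iff]

theorem meets_imageEdge_iff {i j i' j' : Fin k} (h : i ≠ j) (h' : i' ≠ j')
    (hne : s(i, j) ≠ s(i', j')) :
    (imageEdge ψ h).Meets (imageEdge ψ h') ↔ s(i, j).Meets s(i', j') := by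
  have hadj := ψ.map_rel_iff (a := ⟨s(i, j), h⟩) (b := ⟨s(i', j'), h'⟩)
  rw [lineGraph_adj_iff_exists, lineGraph_adj_iff_exists] at hadj
  have hne' : (⟨s(i, j), h⟩ : (completeGraph (Fin k)).edgeSet) ≠ ⟨s(i', j'), h'⟩ :=
    fun e => hne (congrArg Subtype.val e)
  exact (and_iff_right (ψ.injective.ne hne')).symm.trans (hadj.trans (and_iff_right hne'))

theorem imageEdge_meets {i j j' : Fin k} (h : i ≠ j) (h' : i ≠ j') :
    (imageEdge ψ h).Meets (imageEdge ψ h') := by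
  by_cases hjj' : j = j'
  · subst hjj'
    exact .refl _
  refine (meets_imageEdge_iff ψ h h' ?_).2 ⟨i, Sym2.mem_mk_left _ _, Sym2.mem_mk_left _ _⟩
  rwa [Ne, Sym2.congr_right]

theorem imageEdge_ne {i j j' : Fin k} (h : i ≠ j) (h' : i ≠ j') (hjj' : j ≠ j') :
    imageEdge ψ h ≠ imageEdge ψ h' := by
  rwa [Ne, imageEdge_eq_iff, Sym2.congr_right]

theorem notMem_imageEdge_of_mem {i j i' j' : Fin k} (h : i ≠ j) (h' : i' ≠ j')
    (hii' : i ≠ i') (hij' : i ≠ j') (hji' : j ≠ i') (hjj' : j ≠ j') {v : V}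
    (hv : v ∈ imageEdge ψ h) : v ∉ imageEdge ψ h' := fun hv' => by
  have hne : s(i, j) ≠ s(i', j') := by simp [hii', hij']
  obtain ⟨u, hu, hu'⟩ := (meets_imageEdge_iff ψ h h' hne).1 ⟨v, hv, hv'⟩
  simp only [Sym2.mem_iff] at hu hu'
  grind

theorem adj_of_mem_imageEdge {i j : Fin k} (h : i ≠ j) {x y : V} (hxy : x ≠ y)
    (hx : x ∈ imageEdge ψ h) (hy : y ∈ imageEdge ψ h) : G.Adj x y :=
  G.adj_of_mem_incidenceSet hxy ⟨imageEdge_mem_edgeSet ψ h, hx⟩ ⟨imageEdge_mem_edgeSet ψ h, hy⟩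

theorem completeGraph_isContained_of_forall_mem_imageEdge (hk : 4 ≤ k) (c : Fin k → V)
    (hc : ∀ i j (h : i ≠ j), c i ∈ imageEdge ψ h) : completeGraph (Fin k) ⊑ G := by
  have hc' : ∀ i j (h : i ≠ j), c j ∈ imageEdge ψ h := fun i j h =>
    imageEdge_comm ψ h ▸ hc j i h.symm
  have hinj : Function.Injective c := by
    intro i i' hii'
    by_contra hne
    obtain ⟨j, j', hjj', hij, hij', hi'j, hi'j'⟩ := Fin.exists_two_ne_of_four_le hk i i'
    exact notMem_imageEdge_of_mem ψ hij hi'j' hne hij' hi'j.symm hjj' (hc i j hij)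
      (hii' ▸ hc i' j' hi'j')
  exact completeGraph_isContained_iff.2 ⟨⟨c, hinj⟩, fun i j h =>
    adj_of_mem_imageEdge ψ h (hinj.ne h) (hc i j h) (hc' i j h)⟩

theorem card_le_four_of_imageEdge_eq_triangle {i j₁ j₂ j₃ : Fin k} (hi₁ : i ≠ j₁)
    (hi₂ : i ≠ j₂) (hi₃ : i ≠ j₃) {a b c : V} (hab : a ≠ b) (hac : a ≠ c) (hbc : b ≠ c)
    (h₁ : imageEdge ψ hi₁ = s(a, b)) (h₂ : imageEdge ψ hi₂ = s(a, c))
    (h₃ : imageEdge ψ hi₃ = s(b, c)) : k ≤ 4 := by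
  have hall : ∀ j, j ∈ ({i, j₁, j₂, j₃} : Finset (Fin k)) := by
    intro j
    simp only [Finset.mem_insert, Finset.mem_singleton]
    by_contra! hj
    obtain ⟨hji, hj₁, hj₂, hj₃⟩ := hj
    have hij : i ≠ j := hji.symm
    rcases Sym2.eq_side_of_meets_triangle hab hac hbc (h₁ ▸ imageEdge_meets ψ hij hi₁)
      (h₂ ▸ imageEdge_meets ψ hij hi₂) (h₃ ▸ imageEdge_meets ψ hij hi₃) with h | h | h
    · exact imageEdge_ne ψ hij hi₁ hj₁ (h.trans h₁.symm)
    · exact imageEdge_ne ψ hij hi₂ hj₂ (h.trans h₂.symm)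
    · exact imageEdge_ne ψ hij hi₃ hj₃ (h.trans h₃.symm)
  calc k = (Finset.univ : Finset (Fin k)).card := by simp
    _ ≤ ({i, j₁, j₂, j₃} : Finset (Fin k)).card := Finset.card_le_card fun j _ => hall j
    _ ≤ 4 := Finset.card_le_four

theorem not_cliqueFree_four_of_imageEdge_eq_triangle {i j₁ j₂ j₃ : Fin k} (hi₁ : i ≠ j₁)
    (hi₂ : i ≠ j₂) (hi₃ : i ≠ j₃) (h₁₂ : j₁ ≠ j₂) (h₁₃ : j₁ ≠ j₃) (h₂₃ : j₂ ≠ j₃) {a b c : V}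
    (h₁ : imageEdge ψ hi₁ = s(a, b)) (h₂ : imageEdge ψ hi₂ = s(a, c))
    (h₃ : imageEdge ψ hi₃ = s(b, c)) : ¬G.CliqueFree 4 := by
  classical
  have hadj : ∀ {x y : V} {i j : Fin k} (h : i ≠ j), imageEdge ψ h = s(x, y) → G.Adj x y :=
    fun h e => by rw [← mem_edgeSet, ← e]; exact imageEdge_mem_edgeSet ψ h
  have hb₁₂ : b ∉ imageEdge ψ h₁₂ := notMem_imageEdge_of_mem ψ hi₃ h₁₂ hi₁ hi₂ h₁₃.symm
    h₂₃.symm (h₃ ▸ Sym2.mem_mk_left b c)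
  have hc₁₂ : c ∉ imageEdge ψ h₁₂ := notMem_imageEdge_of_mem ψ hi₃ h₁₂ hi₁ hi₂ h₁₃.symm
    h₂₃.symm (h₃ ▸ Sym2.mem_mk_right b c)
  have ha₁₃ : a ∉ imageEdge ψ h₁₃ := notMem_imageEdge_of_mem ψ hi₂ h₁₃ hi₁ hi₃ h₁₂.symm
    h₂₃ (h₂ ▸ Sym2.mem_mk_left a c)
  have ha₂₃ : a ∉ imageEdge ψ h₂₃ := notMem_imageEdge_of_mem ψ hi₁ h₂₃ hi₂ hi₃ h₁₂ h₁₃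
    (h₁ ▸ Sym2.mem_mk_left a b)
  have ha : a ∈ imageEdge ψ h₁₂ := by
    have := imageEdge_meets ψ h₁₂ hi₁.symm
    rw [imageEdge_comm ψ hi₁, h₁] at this
    exact this.left_mem hb₁₂
  have hb : b ∈ imageEdge ψ h₁₃ := by
    have := imageEdge_meets ψ h₁₃ hi₁.symm
    rw [imageEdge_comm ψ hi₁, h₁] at this
    exact this.right_mem ha₁₃
  have hc : c ∈ imageEdge ψ h₂₃ := by
    have := imageEdge_meets ψ h₂₃ hi₂.symm
    rw [imageEdge_comm ψ hi₂, h₂] at this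
    exact this.right_mem ha₂₃
  obtain ⟨w, hw⟩ := Sym2.mem_iff_exists.1 ha
  have hw₁₃ : w ∈ imageEdge ψ h₁₃ := by
    have := imageEdge_meets ψ h₁₃ h₁₂
    rw [hw] at this
    exact this.right_mem ha₁₃
  have hw₂₃ : w ∈ imageEdge ψ h₂₃ := by
    have := imageEdge_meets ψ h₂₃ h₁₂.symm
    rw [imageEdge_comm ψ h₁₂, hw] at this
    exact this.right_mem ha₂₃
  have hwb : w ≠ b := fun e => hb₁₂ (hw ▸ e ▸ Sym2.mem_mk_right a w)
  have hwc : w ≠ c := fun e => hc₁₂ (hw ▸ e ▸ Sym2.mem_mk_right a w)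
  refine ((is3Clique_triple_iff.2 ⟨hadj hi₁ h₁, hadj hi₂ h₂, hadj hi₃ h₃⟩).insert
    (a := w) ?_).not_cliqueFree
  simp only [Finset.mem_insert, Finset.mem_singleton, forall_eq_or_imp, forall_eq]
  exact ⟨(hadj h₁₂ hw).symm, adj_of_mem_imageEdge ψ h₁₃ hwb hw₁₃ hb,
    adj_of_mem_imageEdge ψ h₂₃ hwc hw₂₃ hc⟩

end LineGraphEmbedding

theorem completeGraph_isContained_of_lineGraph_isIndContained (hk : 4 ≤ k)
    (h : (completeGraph (Fin k)).lineGraph ⊴ G.lineGraph) : completeGraph (Fin k) ⊑ G := by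
  obtain ⟨ψ⟩ := h
  by_cases hcentre : ∀ i, ∃ c, ∀ j (h : i ≠ j), c ∈ imageEdge ψ h
  · choose c hc using hcentre
    exact completeGraph_isContained_of_forall_mem_imageEdge ψ hk c hc
  push Not at hcentre
  obtain ⟨i, hi⟩ := hcentre
  obtain ⟨j₁, -, -, hi₁, -, -, -⟩ := Fin.exists_two_ne_of_four_le hk i i
  obtain ⟨j₂, j₃, h₂₃, hi₂, hi₃, h₁₂, h₁₃⟩ := Fin.exists_two_ne_of_four_le hk i j₁
  have hno : ¬∃ v, v ∈ imageEdge ψ hi₁ ∧ v ∈ imageEdge ψ hi₂ ∧ v ∈ imageEdge ψ hi₃ := by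
    rintro ⟨v, hv₁, hv₂, hv₃⟩
    obtain ⟨j, hij, hvj⟩ := hi v
    exact hvj (Sym2.mem_of_meets_of_mem_three (imageEdge_ne ψ hi₁ hi₂ h₁₂)
      (imageEdge_ne ψ hi₁ hi₃ h₁₃) (imageEdge_ne ψ hi₂ hi₃ h₂₃) hv₁ hv₂ hv₃
      (imageEdge_meets ψ hij hi₁) (imageEdge_meets ψ hij hi₂) (imageEdge_meets ψ hij hi₃))
  obtain ⟨a, b, c, hab, hac, hbc, h₁, h₂, h₃⟩ := Sym2.exists_eq_triangle_of_meets
    (imageEdge_meets ψ hi₁ hi₂) (imageEdge_meets ψ hi₁ hi₃) (imageEdge_meets ψ hi₂ hi₃) hno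
  obtain rfl : k = 4 :=
    (card_le_four_of_imageEdge_eq_triangle ψ hi₁ hi₂ hi₃ hab hac hbc h₁ h₂ h₃).antisymm hk
  exact (not_cliqueFree_iff_top_isContained 4).1
    (not_cliqueFree_four_of_imageEdge_eq_triangle ψ hi₁ hi₂ hi₃ h₁₂ h₁₃ h₂₃ h₁ h₂ h₃)

theorem completeGraph_isContained_iff_lineGraph_isIndContained (hk : 4 ≤ k) :
    completeGraph (Fin k) ⊑ G ↔ (completeGraph (Fin k)).lineGraph ⊴ G.lineGraph :=
  ⟨IsContained.isIndContained_lineGraph, completeGraph_isContained_of_lineGraph_isIndContained hk⟩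

end SimpleGraph

/-- For `k ≥ 4`, a graph `G` contains `K_k` as a subgraph if and only if the line graph
`L(G)` contains `L(K_k)` as an induced subgraph. -/
theorem stmt9 {V : Type*} (G : SimpleGraph V) (k : ℕ) (hk : 4 ≤ k) :
    (∃ f : Fin k ↪ V, ∀ i j : Fin k, i ≠ j → G.Adj (f i) (f j)) ↔
      ∃ s : Set G.edgeSet,
        Nonempty ((completeGraph (Fin k)).lineGraph ≃g G.lineGraph.induce s) := by
  rw [← completeGraph_isContained_iff, ← isIndContained_iff_exists_iso_induce]
  exact completeGraph_isContained_iff_lineGraph_isIndContained hk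
end

section
/- Subdividing every edge of a graph G yields a graph S(G) such that G has k pairwise vertex-disjoint paths connecting terminal pairs (s_i, t_i) if and only if S(G) has k mutually induced paths connecting the corresponding terminal pairs (with terminals kept at original vertices). -/
open SimpleGraph

variable {V : Type*}

/-- A walk is an induced path if it is a path and the only adjacencies of `G`
among its vertices are the edges of the walk itself. -/
def IsInducedPath {G : SimpleGraph V} {a b : V} (p : G.Walk a b) : Prop :=
  p.IsPath ∧ ∀ x y, x ∈ p.support → y ∈ p.support → G.Adj x y → p.toSubgraph.Adj x y

/-- The full subdivision `S(G)` of `G`: every edge `uv` is replaced by a path through a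
new vertex corresponding to that edge. -/
def fullSubdiv (G : SimpleGraph V) : SimpleGraph (V ⊕ G.edgeSet) where
  Adj x y :=
    match x, y with
    | Sum.inl v, Sum.inr e => v ∈ (e : Sym2 V)
    | Sum.inr e, Sum.inl v => v ∈ (e : Sym2 V)
    | _, _ => False
  symm := by constructor; rintro (v | e) (w | f) h <;> first | exact h | exact h.elim
  loopless := by constructor; rintro (v | e) h <;> exact h.elim

/-!
A path of `G` lifts to `S(G)` by inserting the subdivision vertex of each of its edges. Every
vertex of `S(G)` stands for one or two vertices of `G`, adjacent vertices of `S(G)` stand for a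
common one, and the vertices of a lifted path stand only for vertices of the original path: so
lifts of vertex-disjoint paths are disjoint and non-adjacent. A lift has no chords, since every
edge of `S(G)` joins an original vertex to the subdivision vertex of an incident edge. Conversely
a walk of `S(G)` between original vertices contracts to a walk of `G` through the original
vertices it visits, and shortening that walk to a path keeps the paths disjoint.
-/

variable {G : SimpleGraph V}

@[simp]
lemma fullSubdiv_adj_inl_inr {v : V} {e : G.edgeSet} :
    (fullSubdiv G).Adj (.inl v) (.inr e) ↔ v ∈ (e : Sym2 V) := Iff.rfl

@[simp]
lemma fullSubdiv_adj_inr_inl {v : V} {e : G.edgeSet} :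
    (fullSubdiv G).Adj (.inr e) (.inl v) ↔ v ∈ (e : Sym2 V) := Iff.rfl

@[simp]
lemma fullSubdiv_not_adj_inl_inl {v w : V} : ¬ (fullSubdiv G).Adj (.inl v) (.inl w) := id

@[simp]
lemma fullSubdiv_not_adj_inr_inr {e f : G.edgeSet} : ¬ (fullSubdiv G).Adj (.inr e) (.inr f) := id

def baseVerts : V ⊕ G.edgeSet → Set V :=
  Sum.elim (fun v => {v}) (fun e => {v | v ∈ (e : Sym2 V)})

@[simp] lemma baseVerts_inl (v : V) : baseVerts (.inl v : V ⊕ G.edgeSet) = {v} := rfl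

@[simp] lemma mem_baseVerts_inr {e : G.edgeSet} {v : V} :
    v ∈ baseVerts (.inr e : V ⊕ G.edgeSet) ↔ v ∈ (e : Sym2 V) := Iff.rfl

lemma baseVerts_nonempty (x : V ⊕ G.edgeSet) : (baseVerts x).Nonempty := by
  rcases x with v | e
  · exact Set.singleton_nonempty v
  · exact ⟨_, Sym2.out_fst_mem (e : Sym2 V)⟩

lemma not_disjoint_baseVerts_of_adj {x y : V ⊕ G.edgeSet} (h : (fullSubdiv G).Adj x y) :
    ¬ Disjoint (baseVerts x) (baseVerts y) := by
  rcases x with v | e <;> rcases y with w | f <;> simp_all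

namespace SimpleGraph.Walk

def subdivide : ∀ {u v : V}, G.Walk u v → (fullSubdiv G).Walk (.inl u) (.inl v)
  | _, _, nil => nil
  | u, _, cons h p =>
      cons (show (fullSubdiv G).Adj (.inl u) (.inr ⟨s(u, _), h⟩) from Sym2.mem_mk_left _ _)
        (cons (show (fullSubdiv G).Adj (.inr ⟨s(u, _), h⟩) (.inl _) from Sym2.mem_mk_right _ _)
          p.subdivide)

variable {u v : V} {p : G.Walk u v}

@[simp]
lemma inl_mem_support_subdivide {x : V} : .inl x ∈ p.subdivide.support ↔ x ∈ p.support := by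
  induction p with
  | nil => simp [subdivide]
  | cons h p ih => simp [subdivide, ih]

@[simp]
lemma inr_mem_support_subdivide {e : G.edgeSet} :
    .inr e ∈ p.subdivide.support ↔ (e : Sym2 V) ∈ p.edges := by
  induction p with
  | nil => simp [subdivide]
  | cons h p ih =>
    simp only [subdivide, support_cons, edges_cons, List.mem_cons, ih, reduceCtorEq,
      false_or, Sum.inr.injEq]
    rw [Subtype.ext_iff, eq_comm]

lemma baseVerts_subset_support {x : V ⊕ G.edgeSet} (hx : x ∈ p.subdivide.support) :
    baseVerts x ⊆ {w | w ∈ p.support} := by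
  rcases x with w | e
  · simpa using hx
  · exact fun w hw => mem_support_iff_exists_mem_edges.mpr
      (.inr ⟨e, inr_mem_support_subdivide.mp hx, hw⟩)

lemma disjoint_baseVerts {u' v' : V} {p' : G.Walk u' v'}
    (hpp' : ∀ w ∈ p.support, w ∉ p'.support) {x y : V ⊕ G.edgeSet}
    (hx : x ∈ p.subdivide.support) (hy : y ∈ p'.subdivide.support) :
    Disjoint (baseVerts x) (baseVerts y) :=
  Set.disjoint_left.mpr fun w hwx hwy =>
    hpp' w (baseVerts_subset_support hx hwx) (baseVerts_subset_support hy hwy)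

lemma mk_inl_inr_mem_edges_subdivide {x : V} {e : G.edgeSet} (hx : x ∈ (e : Sym2 V))
    (he : (e : Sym2 V) ∈ p.edges) : s(.inl x, .inr e) ∈ p.subdivide.edges := by
  induction p with
  | nil => simp at he
  | cons h p ih =>
    simp only [subdivide, edges_cons, List.mem_cons] at he ⊢
    rcases he with he | he
    · obtain rfl : e = ⟨_, h⟩ := Subtype.ext he
      rcases Sym2.mem_iff.mp hx with rfl | rfl
      · exact .inl rfl
      · exact .inr (.inl Sym2.eq_swap)
    · exact .inr (.inr (ih he))

lemma IsPath.subdivide (hp : p.IsPath) : p.subdivide.IsPath := by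
  induction p with
  | nil => exact .nil
  | cons h p ih =>
    rw [cons_isPath_iff] at hp
    refine (cons_isPath_iff _ _).mpr ⟨(cons_isPath_iff _ _).mpr ⟨ih hp.1, ?_⟩, ?_⟩
    · exact fun he => hp.2 (p.fst_mem_support_of_mem_edges (inr_mem_support_subdivide.mp he))
    · simpa using hp.2

lemma IsPath.isInducedPath_subdivide (hp : p.IsPath) : IsInducedPath p.subdivide := by
  refine ⟨hp.subdivide, ?_⟩
  intro x y hx hy hxy
  rw [← Subgraph.mem_edgeSet, mem_edges_toSubgraph]
  rcases x with w | e <;> rcases y with w' | e' <;> simp only [fullSubdiv_not_adj_inl_inl,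
    fullSubdiv_not_adj_inr_inr, fullSubdiv_adj_inl_inr, fullSubdiv_adj_inr_inl] at hxy
  · exact mk_inl_inr_mem_edges_subdivide hxy (inr_mem_support_subdivide.mp hy)
  · exact Sym2.eq_swap ▸ mk_inl_inr_mem_edges_subdivide hxy (inr_mem_support_subdivide.mp hx)

end SimpleGraph.Walk

open SimpleGraph.Walk in
/-- Stated for every start `c` that the first vertex stands for, so that the induction can pass
through subdivision vertices. -/
lemma exists_walk_of_fullSubdiv_walk {x y : V ⊕ G.edgeSet} {b c : V}
    (q : (fullSubdiv G).Walk x y) (hy : y = .inl b) (hc : c ∈ baseVerts x) :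
    ∃ p : G.Walk c b, ∀ v ∈ p.support, v = c ∨ .inl v ∈ q.support := by
  induction q generalizing c with
  | nil =>
    subst hy
    obtain rfl : c = b := hc
    exact ⟨nil, by simp⟩
  | @cons x z y h q ih =>
    rcases x with a | e <;> rcases z with w | f <;> simp only [fullSubdiv_not_adj_inl_inl,
      fullSubdiv_not_adj_inr_inr, fullSubdiv_adj_inl_inr, fullSubdiv_adj_inr_inl] at h
    · obtain rfl : c = a := hc
      obtain ⟨p, hp⟩ := ih hy h
      exact ⟨p, fun v hv => (hp v hv).imp_right fun hv => by simp [hv]⟩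
    · obtain ⟨p, hp⟩ := ih hy rfl
      have hsupp : ∀ v ∈ p.support, .inl v ∈ q.support := fun v hv =>
        (hp v hv).elim (fun hvw => hvw ▸ q.start_mem_support) id
      by_cases hcw : c = w
      · subst hcw
        exact ⟨p, fun v hv => .inr (by simp [hsupp v hv])⟩
      · have hcw : G.Adj c w := G.adj_iff_exists_edge.mpr ⟨hcw, e, e.2, hc, h⟩
        refine ⟨cons hcw p, fun v hv => ?_⟩
        rw [support_cons, List.mem_cons] at hv
        rcases hv with rfl | hv
        · exact .inl rfl
        · exact .inr (by simp [hsupp v hv])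

lemma exists_isPath_of_fullSubdiv_walk {a b : V}
    (q : (fullSubdiv G).Walk (.inl a) (.inl b)) :
    ∃ p : G.Walk a b, p.IsPath ∧ ∀ v ∈ p.support, .inl v ∈ q.support := by
  classical
  obtain ⟨p, hp⟩ := exists_walk_of_fullSubdiv_walk q rfl rfl
  refine ⟨p.bypass, p.bypass_isPath, fun v hv => ?_⟩
  rcases hp v (p.support_bypass_subset_support hv) with rfl | hv
  · exact q.start_mem_support
  · exact hv

/-- `G` has `k` pairwise vertex-disjoint paths connecting the terminal pairs
`(s i, t i)` if and only if the full subdivision `S(G)` has `k` mutually induced paths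
connecting the corresponding terminal pairs (terminals kept at the original vertices). -/
theorem stmt13 (G : SimpleGraph V) {k : ℕ} (s t : Fin k → V) :
    (∃ p : ∀ i : Fin k, G.Walk (s i) (t i),
      (∀ i, (p i).IsPath) ∧
      (∀ i j, i ≠ j → ∀ x, x ∈ (p i).support → x ∉ (p j).support)) ↔
    (∃ q : ∀ i : Fin k, (fullSubdiv G).Walk (Sum.inl (s i)) (Sum.inl (t i)),
      (∀ i, IsInducedPath (q i)) ∧
      (∀ i j, i ≠ j → ∀ x, x ∈ (q i).support → x ∉ (q j).support) ∧
      (∀ i j, i ≠ j → ∀ x y, x ∈ (q i).support → y ∈ (q j).support →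
        ¬ (fullSubdiv G).Adj x y)) := by
  constructor
  · rintro ⟨p, hpath, hdisj⟩
    refine ⟨fun i => (p i).subdivide, fun i => (hpath i).isInducedPath_subdivide, ?_, ?_⟩
    · intro i j hij x hxi hxj
      exact (baseVerts_nonempty x).ne_empty
        (disjoint_self.mp (Walk.disjoint_baseVerts (hdisj i j hij) hxi hxj))
    · intro i j hij x y hxi hyj hxy
      exact not_disjoint_baseVerts_of_adj hxy (Walk.disjoint_baseVerts (hdisj i j hij) hxi hyj)
  · rintro ⟨q, -, hdisj, -⟩
    choose p hpath hsupp using fun i => exists_isPath_of_fullSubdiv_walk (q i)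
    exact ⟨p, hpath, fun i j hij v hvi hvj =>
      hdisj i j hij (.inl v) (hsupp i v hvi) (hsupp j v hvj)⟩
end
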